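/- Fix ν > 0 and for c ∈ ℝ set f_ν(c) = c/(1 + c²/ν), m̃(ν, c) = 2f_ν(c) − f_{ν/2}(c), and m̃̃(ν, c) = 2m̃(ν, c) − m̃(ν/2, c). Then m̃(ν, c) = c if and only if c = 0, while m̃̃(ν, c) = c if and only if c ∈ {0, √(ν/2), −√(ν/2)}. -/
import Mathlib

/-- The robust (redescending) location estimand evaluated at a constant `c`. -/
noncomputable def fRobust (ν c : ℝ) : ℝ := c / (1 + c ^ 2 / ν)
/-- Once Richardson-corrected estimand at a constant `c`. -/
noncomputable def mTilde (ν c : ℝ) : ℝ := 2 * fRobust ν c - fRobust (ν / 2) c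
/-- Twice Richardson-corrected estimand at a constant `c`. -/
noncomputable def mTildeTilde (ν c : ℝ) : ℝ := 2 * mTilde ν c - mTilde (ν / 2) c

/-- For a degenerate (constant) random variable equal to `c`: the once-corrected
estimand is unbiased iff `c = 0`, while the twice-corrected estimand is unbiased iff
`c ∈ {0, √(ν/2), −√(ν/2)}`. -/
theorem mTilde_fixed_points {ν : ℝ} (hν : 0 < ν) (c : ℝ) :
    (mTilde ν c = c ↔ c = 0) ∧
    (mTildeTilde ν c = c ↔ c = 0 ∨ c = Real.sqrt (ν / 2) ∨ c = -Real.sqrt (ν / 2)) := by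
  have hν0 : ν ≠ 0 := ne_of_gt hν
  have h1 : ν + c ^ 2 ≠ 0 := by positivity
  have h2 : ν + 2 * c ^ 2 ≠ 0 := by positivity
  have h4 : ν + 4 * c ^ 2 ≠ 0 := by positivity
  have key1 : mTilde ν c - c = -2 * c ^ 5 / ((ν + c ^ 2) * (ν + 2 * c ^ 2)) := by
    unfold mTilde fRobust
    field_simp
    ring
  have key2 : mTildeTilde ν c - c =
      4 * c ^ 5 * (ν - 2 * c ^ 2) / ((ν + c ^ 2) * (ν + 2 * c ^ 2) * (ν + 4 * c ^ 2)) := by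
    unfold mTildeTilde mTilde fRobust
    field_simp
    ring
  constructor
  · constructor
    · intro h
      have h0 : (-2 : ℝ) * c ^ 5 / ((ν + c ^ 2) * (ν + 2 * c ^ 2)) = 0 := by
        rw [← key1, h]; ring
      have := (div_eq_zero_iff.mp h0).resolve_right (mul_ne_zero h1 h2)
      have hc5 : c ^ 5 = 0 := by linarith
      exact pow_eq_zero_iff (by norm_num) |>.mp hc5
    · rintro rfl
      simp [mTilde, fRobust]
  · constructor
    · intro h
      have h0 : (4:ℝ) * c ^ 5 * (ν - 2 * c ^ 2) / ((ν + c ^ 2) * (ν + 2 * c ^ 2) * (ν + 4 * c ^ 2)) = 0 := by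
        rw [← key2, h]; ring
      have hnum := (div_eq_zero_iff.mp h0).resolve_right
        (mul_ne_zero (mul_ne_zero h1 h2) h4)
      rcases mul_eq_zero.mp hnum with h5 | h6
      · rcases mul_eq_zero.mp h5 with h' | h'
        · norm_num at h'
        · exact Or.inl (pow_eq_zero_iff (by norm_num) |>.mp h')
      · right
        have hc2 : c ^ 2 = ν / 2 := by linarith
        have habs : |c| = Real.sqrt (ν / 2) := by
          rw [← Real.sqrt_sq_eq_abs, hc2]
        rcases abs_eq (Real.sqrt_nonneg _) |>.mp habs with h' | h'
        · exact Or.inl h'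
        · exact Or.inr h'
    · have sq2 : Real.sqrt (ν / 2) ^ 2 = ν / 2 := Real.sq_sqrt (by linarith)
      rintro (rfl | h | h)
      · simp [mTildeTilde, mTilde, fRobust]
      · have hc2 : c ^ 2 = ν / 2 := by rw [h]; exact sq2
        have h0 : mTildeTilde ν c - c = 0 := by rw [key2, hc2]; ring
        linarith
      · have hc2 : c ^ 2 = ν / 2 := by rw [h, neg_sq]; exact sq2
        have h0 : mTildeTilde ν c - c = 0 := by rw [key2, hc2]; ring
        linarith
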